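/- For integers $k \geq 3$ and real numbers $t, s$ with $0 \leq s \leq t/(k-1)$, define $\mathscr{L}(k; t, s) := \int_{s}^{\frac{t-s}{k-2}} \int_{t_2}^{\frac{t-s-t_2}{k-3}} \cdots \int_{t_{k-3}}^{\frac{t-s-t_2-\cdots-t_{k-3}}{2}} dt_{k-2} \cdots dt_2$ (with $\mathscr{L}(3;t,s) = 1$). Then $\mathscr{L}(k; t, s) = \frac{(t - (k-1)s)^{k-3}}{(k-2)! \,(k-3)!}$. -/

import Mathlib

/-- The iterated integral `𝓛(k;t,s)`, defined via the recursion
`𝓛(3;t,s) = 1` and `𝓛(k+1;t,s) = ∫_s^{(t-s)/(k-1)} 𝓛(k;t-s,u) du`,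
which unfolds exactly to the `(k-3)`-fold iterated integral
`∫_s^{(t-s)/(k-2)} ∫_{t₂}^{(t-s-t₂)/(k-3)} ⋯ dt_{k-2} ⋯ dt₂`. -/
noncomputable def Lint : ℕ → ℝ → ℝ → ℝ
  | 0, _, _ => 1
  | 1, _, _ => 1
  | 2, _, _ => 1
  | 3, _, _ => 1
  | (n+4), t, s => ∫ u in s..((t - s) / (n + 2)), Lint (n+3) (t - s) u

lemma Lint_key : ∀ n : ℕ, ∀ t s : ℝ, 0 ≤ s → s ≤ t / (n + 2) →
    Lint (n+3) t s = (t - ((n : ℝ) + 2) * s) ^ n /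
      ((Nat.factorial (n+1)) * (Nat.factorial n)) := by
  intro n
  induction n with
  | zero => intro t s hs hst; simp [Lint]
  | succ n ih =>
    intro t s hs hst
    have hpos : (0:ℝ) < (n:ℝ) + 2 := by positivity
    push_cast at hst
    have hb : s ≤ (t - s) / ((n:ℝ) + 2) := by
      rw [le_div_iff₀ hpos]
      rw [le_div_iff₀ (by positivity : (0:ℝ) < (n:ℝ) + 1 + 2)] at hst
      nlinarith
    have hcongr : Set.EqOn (fun u => Lint (n+3) (t - s) u)
        (fun u => ((t - s) - ((n : ℝ) + 2) * u) ^ n /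
          ((Nat.factorial (n+1)) * (Nat.factorial n)))
        (Set.uIcc s ((t - s) / ((n:ℝ) + 2))) := by
      intro u hu
      rw [Set.uIcc_of_le hb] at hu
      exact ih (t - s) u (le_trans hs hu.1) hu.2
    show (∫ u in s..((t - s) / ((n:ℝ) + 2)), Lint (n+3) (t - s) u) = _
    rw [intervalIntegral.integral_congr hcongr]
    have : (∫ u in s..((t - s) / ((n:ℝ) + 2)),
        ((t - s) - ((n : ℝ) + 2) * u) ^ n /
          ((Nat.factorial (n+1)) * (Nat.factorial n)))
        = (∫ u in s..((t - s) / ((n:ℝ) + 2)),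
        ((t - s) - ((n : ℝ) + 2) * u) ^ n) /
          ((Nat.factorial (n+1)) * (Nat.factorial n)) := by
      rw [intervalIntegral.integral_div]
    rw [this]
    have hint : (∫ u in s..((t - s) / ((n:ℝ) + 2)),
        ((t - s) - ((n : ℝ) + 2) * u) ^ n)
        = ((t - s) - ((n:ℝ)+2) * s) ^ (n+1) / (((n:ℝ)+2) * ((n:ℝ)+1)) := by
      have h1 : (∫ u in s..((t - s) / ((n:ℝ) + 2)),
          (fun x => ((t - s) - x) ^ n) (((n:ℝ) + 2) * u))
          = (((n:ℝ)+2))⁻¹ • ∫ x in (((n:ℝ)+2)*s)..(((n:ℝ)+2)*((t - s) / ((n:ℝ) + 2))),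
            ((t - s) - x) ^ n := by
        exact intervalIntegral.integral_comp_mul_left (fun x => ((t - s) - x) ^ n) (ne_of_gt hpos)
      simp only at h1
      rw [h1]
      rw [mul_div_cancel₀ _ (ne_of_gt hpos)]
      rw [intervalIntegral.integral_comp_sub_left (fun x => x ^ n) (t - s)]
      rw [integral_pow]
      rw [sub_self, zero_pow (Nat.succ_ne_zero n)]
      rw [smul_eq_mul]
      field_simp
      rw [sub_zero]
    rw [hint]
    rw [Nat.factorial_succ (n+1), Nat.factorial_succ n]
    have hf1 : (0:ℝ) < (Nat.factorial (n+1) : ℝ) := by positivity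
    have hf0 : (0:ℝ) < (Nat.factorial n : ℝ) := by positivity
    have h2 : t - s - ((n:ℝ) + 2) * s = t - (((n:ℕ)+1 : ℕ) + 2 : ℝ) * s := by push_cast; ring
    rw [h2, div_div]
    congr 1
    push_cast
    ring

/-- For `k ≥ 3` and `0 ≤ s ≤ t/(k-1)`,
`𝓛(k;t,s) = (t - (k-1)s)^{k-3} / ((k-2)!(k-3)!)`. -/
theorem stmt_9 (k : ℕ) (hk : 3 ≤ k) (t s : ℝ) (hs : 0 ≤ s) (hst : s ≤ t / (k - 1)) :
    Lint k t s =
      (t - (k - 1 : ℝ) * s) ^ (k - 3) /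
        ((Nat.factorial (k - 2)) * (Nat.factorial (k - 3))) := by
  obtain ⟨n, rfl⟩ : ∃ n, k = n + 3 := ⟨k - 3, by omega⟩
  have h1 : ((n + 3 : ℕ) : ℝ) - 1 = (n : ℝ) + 2 := by push_cast; ring
  rw [h1] at hst ⊢
  have h2 : n + 3 - 2 = n + 1 := by omega
  have h3 : n + 3 - 3 = n := by omega
  rw [h2, h3]
  exact Lint_key n t s hs hst
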